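/- arXiv:2507.02094 — 6 statements merged into one kernel-verified Lean document; each statement's English description precedes it below -/
import Mathlib

section
/- For α ∈ (0,1), there exists a constant C(α) > 0 such that for all t > 0, ∫_0^t min{(t−s)^{−α−1}, (t−s)^{α−1}} · min{s^{−α}, 1} ds ≤ C(α) · min{t^{−α}, 1}. -/
open MeasureTheory Real intervalIntegral Set

noncomputable def cker (α u : ℝ) : ℝ := min (u ^ (-α - 1)) (u ^ (α - 1))

lemma cker_meas (α : ℝ) : Measurable (cker α) := by
  unfold cker
  exact (measurable_id.pow measurable_const).min (measurable_id.pow measurable_const)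

lemma cker_nonneg {α u : ℝ} (hu : 0 ≤ u) : 0 ≤ cker α u :=
  le_min (rpow_nonneg hu _) (rpow_nonneg hu _)

lemma cker_intble {α : ℝ} (hα0 : 0 < α) {a b : ℝ} (ha : 0 ≤ a) (hb : 0 ≤ b) :
    IntervalIntegrable (cker α) volume a b := by
  refine (intervalIntegral.intervalIntegrable_rpow' (r := α - 1) (by linarith)).mono_fun'
    ((cker_meas α).aestronglyMeasurable) ?_
  filter_upwards [ae_restrict_mem measurableSet_uIoc] with u hu
  have hu0 : 0 < u := lt_of_le_of_lt (le_inf ha hb) hu.1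
  rw [Real.norm_eq_abs, abs_of_nonneg (cker_nonneg hu0.le)]
  exact min_le_right _ _

lemma cker_int_le_one {α : ℝ} (hα0 : 0 < α) {b : ℝ} (hb : 0 ≤ b) (hb1 : b ≤ 1) :
    ∫ u in (0:ℝ)..b, cker α u ≤ 1 / α := by
  have h1 : ∫ u in (0:ℝ)..b, cker α u ≤ ∫ u in (0:ℝ)..b, u ^ (α - 1) :=
    integral_mono_on hb (cker_intble hα0 le_rfl hb)
      (intervalIntegral.intervalIntegrable_rpow' (by linarith))
      (fun u _ => min_le_right _ _)
  rw [integral_rpow (Or.inl (by linarith)), Real.zero_rpow (by linarith : α - 1 + 1 ≠ 0)] at h1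
  have h2 : b ^ (α - 1 + 1) ≤ 1 := by
    rw [(by ring : α - 1 + 1 = α)]
    exact Real.rpow_le_one hb hb1 hα0.le
  have h3 : (b ^ (α - 1 + 1) - 0) / (α - 1 + 1) ≤ 1 / α := by
    rw [sub_zero, (by ring : α - 1 + 1 = α)]
    rw [(by ring : α - 1 + 1 = α)] at h2
    gcongr
  linarith

lemma cker_int_le {α : ℝ} (hα0 : 0 < α) (hα1 : α < 1) {b : ℝ} (hb : 0 ≤ b) :
    ∫ u in (0:ℝ)..b, cker α u ≤ 2 / α := by
  rcases le_or_gt b 1 with h | h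
  · have := cker_int_le_one hα0 hb h
    have : (1:ℝ)/α ≤ 2/α := by gcongr; norm_num
    linarith [cker_int_le_one hα0 hb h]
  · have hsplit := integral_add_adjacent_intervals (a := (0:ℝ)) (b := 1) (c := b)
      (cker_intble hα0 le_rfl zero_le_one) (cker_intble hα0 zero_le_one (by linarith))
    have h1 := cker_int_le_one hα0 zero_le_one le_rfl
    have h0uIcc : (0:ℝ) ∉ Set.uIcc 1 b := by
      rw [Set.uIcc_of_le h.le]
      simp only [Set.mem_Icc, not_and]
      intro h'; linarith
    have h2 : ∫ u in (1:ℝ)..b, cker α u ≤ ∫ u in (1:ℝ)..b, u ^ (-α - 1) :=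
      integral_mono_on h.le (cker_intble hα0 zero_le_one (by linarith))
        (intervalIntegrable_rpow (Or.inr h0uIcc))
        (fun u _ => min_le_left _ _)
    rw [integral_rpow (Or.inr ⟨by intro hc; exact absurd (by linarith : α = 0) hα0.ne', h0uIcc⟩),
      Real.one_rpow, (by ring : -α - 1 + 1 = -α)] at h2
    have hbn : 0 ≤ b ^ (-α) := Real.rpow_nonneg (by linarith) _
    have h4 : (b ^ (-α) - 1) / (-α) ≤ 1 / α := by
      rw [div_neg, ← neg_div, neg_sub]
      gcongr
      linarith
    rw [← hsplit]
    have hsum : (1:ℝ)/α + 1/α = 2/α := by ring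
    linarith

theorem convolution_kernel_estimate (α : ℝ) (hα : α ∈ Set.Ioo (0:ℝ) 1) :
    ∃ C : ℝ, 0 < C ∧ ∀ t : ℝ, 0 < t →
      ∫ s in Set.Ioo 0 t,
          min ((t - s) ^ (-α - 1)) ((t - s) ^ (α - 1)) * min (s ^ (-α)) 1
        ≤ C * min (t ^ (-α)) 1 := by
  obtain ⟨hα0, hα1⟩ := hα
  have h1α : 0 < 1 - α := by linarith
  refine ⟨4/α + 4/(1-α), add_pos (div_pos four_pos hα0) (div_pos four_pos h1α), ?_⟩
  intro t ht
  have ht2 : 0 < t/2 := by linarith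
  set F : ℝ → ℝ := fun s => cker α (t - s) * min (s ^ (-α)) 1 with hFdef
  have hEq : (∫ s in Set.Ioo 0 t,
      min ((t - s) ^ (-α - 1)) ((t - s) ^ (α - 1)) * min (s ^ (-α)) 1)
      = ∫ s in (0:ℝ)..t, F s := by
    rw [intervalIntegral.integral_of_le ht.le, MeasureTheory.integral_Ioc_eq_integral_Ioo]
    rfl
  rw [hEq]
  have hFm : Measurable F := by
    apply Measurable.mul
    · exact (cker_meas α).comp (measurable_const.sub measurable_id)
    · exact (measurable_id.pow measurable_const).min measurable_const
  have hF_nonneg : ∀ s ∈ Set.Ioc (0:ℝ) t, 0 ≤ F s := fun s hs =>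
    mul_nonneg (cker_nonneg (by linarith [hs.2] : (0:ℝ) ≤ t - s))
      (le_min (rpow_nonneg hs.1.le _) zero_le_one)
  have hg1 : IntervalIntegrable (fun s : ℝ => cker α (t/2) * s ^ (-α)) volume 0 (t/2) :=
    (intervalIntegral.intervalIntegrable_rpow' (by linarith)).const_mul _
  have hb1 : ∀ s ∈ Set.Icc (0:ℝ) (t/2), F s ≤ cker α (t/2) * s ^ (-α) := by
    intro s hs
    have hts : t/2 ≤ t - s := by linarith [hs.2]
    have hker : cker α (t - s) ≤ cker α (t/2) :=
      min_le_min (Real.rpow_le_rpow_of_nonpos ht2 hts (by linarith))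
        (Real.rpow_le_rpow_of_nonpos ht2 hts (by linarith))
    exact mul_le_mul hker (min_le_left _ _)
      (le_min (rpow_nonneg hs.1 _) zero_le_one) (cker_nonneg ht2.le)
  have hI1 : IntervalIntegrable F volume 0 (t/2) := by
    refine hg1.mono_fun' hFm.aestronglyMeasurable ?_
    filter_upwards [ae_restrict_mem measurableSet_uIoc] with s hs
    rw [Set.uIoc_of_le ht2.le] at hs
    rw [Real.norm_eq_abs, abs_of_nonneg (hF_nonneg s ⟨hs.1, by linarith [hs.2]⟩)]
    exact hb1 s ⟨hs.1.le, hs.2⟩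
  have hI2g : IntervalIntegrable (fun s : ℝ => cker α (t - s)) volume (t/2) t := by
    have h := (cker_intble (α := α) hα0 (le_refl 0) ht2.le).comp_sub_left t
    rw [sub_zero, (by ring : t - t/2 = t/2)] at h
    exact h.symm
  have hI2 : IntervalIntegrable F volume (t/2) t := by
    refine hI2g.mono_fun' hFm.aestronglyMeasurable ?_
    filter_upwards [ae_restrict_mem measurableSet_uIoc] with s hs
    rw [Set.uIoc_of_le (by linarith : t/2 ≤ t)] at hs
    rw [Real.norm_eq_abs, abs_of_nonneg (hF_nonneg s ⟨lt_trans ht2 hs.1, hs.2⟩)]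
    calc F s ≤ cker α (t - s) * 1 :=
          mul_le_mul_of_nonneg_left (min_le_right _ _) (cker_nonneg (by linarith [hs.2]))
      _ = cker α (t - s) := mul_one _
  rw [← intervalIntegral.integral_add_adjacent_intervals hI1 hI2]
  have hP1 : ∫ s in (0:ℝ)..(t/2), F s ≤ cker α (t/2) * ((t/2) ^ (1 - α) / (1-α)) := by
    have h := intervalIntegral.integral_mono_on ht2.le hI1 hg1 hb1
    rw [intervalIntegral.integral_const_mul, integral_rpow (Or.inl (by linarith)),
      Real.zero_rpow (by linarith : -α + 1 ≠ 0), (by ring : -α + 1 = 1 - α), sub_zero] at h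
    exact h
  set n : ℝ := min ((t/2) ^ (-α)) 1 with hn
  have hn0 : 0 ≤ n := le_min (rpow_nonneg ht2.le _) zero_le_one
  have hg2 : IntervalIntegrable (fun s : ℝ => cker α (t - s) * n) volume (t/2) t :=
    hI2g.mul_const _
  have hb2 : ∀ s ∈ Set.Icc (t/2) t, F s ≤ cker α (t - s) * n := by
    intro s hs
    have hts : 0 ≤ t - s := by linarith [hs.2]
    refine mul_le_mul_of_nonneg_left ?_ (cker_nonneg hts)
    exact min_le_min (Real.rpow_le_rpow_of_nonpos ht2 hs.1 (by linarith)) le_rfl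
  have hP2 : ∫ s in (t/2)..t, F s ≤ (2/α) * n := by
    have h1 := intervalIntegral.integral_mono_on (by linarith : t/2 ≤ t) hI2 hg2 hb2
    rw [intervalIntegral.integral_mul_const] at h1
    have h2 : ∫ s in (t/2)..t, cker α (t - s) = ∫ u in (0:ℝ)..(t/2), cker α u := by
      rw [intervalIntegral.integral_comp_sub_left (fun u => cker α u) t, sub_self,
        (by ring : t - t/2 = t/2)]
    rw [h2] at h1
    calc ∫ s in (t/2)..t, F s ≤ (∫ u in (0:ℝ)..(t/2), cker α u) * n := h1
      _ ≤ (2/α) * n := mul_le_mul_of_nonneg_right (cker_int_le hα0 hα1 ht2.le) hn0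
  rcases le_or_gt t 1 with htle | htgt
  · have hmin : min (t ^ (-α)) 1 = 1 :=
      min_eq_right (Real.one_le_rpow_of_pos_of_le_one_of_nonpos ht htle (by linarith))
    rw [hmin, mul_one]
    have hA : cker α (t/2) * ((t/2) ^ (1-α) / (1-α)) ≤ 1/(1-α) := by
      have h1 : cker α (t/2) * (t/2) ^ (1-α) ≤ (t/2) ^ (α-1) * (t/2) ^ (1-α) :=
        mul_le_mul_of_nonneg_right (min_le_right _ _) (rpow_nonneg ht2.le _)
      rw [← Real.rpow_add ht2, (by ring : α - 1 + (1-α) = 0), Real.rpow_zero] at h1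
      calc cker α (t/2) * ((t/2) ^ (1-α)/(1-α)) = cker α (t/2) * (t/2) ^ (1-α) / (1-α) := by
            ring
        _ ≤ 1/(1-α) := by gcongr
    have hB : (2/α) * n ≤ 2/α := by
      calc (2/α)*n ≤ (2/α)*1 := mul_le_mul_of_nonneg_left (min_le_right _ _) (by positivity)
        _ = 2/α := mul_one _
    have hc1 : (1:ℝ)/(1-α) ≤ 4/(1-α) := by gcongr; norm_num
    have hc2 : (2:ℝ)/α ≤ 4/α := by gcongr; norm_num
    linarith
  · have hmin : min (t ^ (-α)) 1 = t ^ (-α) :=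
      min_eq_left (Real.rpow_le_one_of_one_le_of_nonpos htgt.le (by linarith))
    rw [hmin]
    have htα : 0 ≤ t ^ (-α) := rpow_nonneg ht.le _
    have hhalf : (t/2) ^ (-α) ≤ 2 * t ^ (-α) := by
      rw [show (t/2:ℝ) = t * 2⁻¹ from by ring, Real.mul_rpow ht.le (by norm_num),
        Real.inv_rpow (by norm_num : (0:ℝ) ≤ 2), Real.rpow_neg (by norm_num : (0:ℝ) ≤ 2),
        inv_inv]
      have h2 : (2:ℝ) ^ α ≤ 2 := by
        calc (2:ℝ) ^ α ≤ 2 ^ (1:ℝ) := Real.rpow_le_rpow_of_exponent_le one_le_two hα1.le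
          _ = 2 := Real.rpow_one 2
      calc t ^ (-α) * 2 ^ α ≤ t ^ (-α) * 2 := mul_le_mul_of_nonneg_left h2 htα
        _ = 2 * t ^ (-α) := mul_comm _ _
    have hA : cker α (t/2) * ((t/2) ^ (1-α) / (1-α)) ≤ 4 * t ^ (-α) / (1-α) := by
      have h1 : cker α (t/2) * (t/2) ^ (1-α) ≤ (t/2) ^ (-α-1) * (t/2) ^ (1-α) :=
        mul_le_mul_of_nonneg_right (min_le_left _ _) (rpow_nonneg ht2.le _)
      rw [← Real.rpow_add ht2, (by ring : -α - 1 + (1-α) = -α + -α),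
        Real.rpow_add ht2] at h1
      have h2 : (t/2) ^ (-α) * (t/2) ^ (-α) ≤ (2*t ^ (-α)) * (2*t ^ (-α)) :=
        mul_le_mul hhalf hhalf (rpow_nonneg ht2.le _) (by positivity)
      have h3 : (2*t ^ (-α)) * (2*t ^ (-α)) = 4 * (t ^ (-α) * t ^ (-α)) := by ring
      have h4 : t ^ (-α) * t ^ (-α) = t ^ (-α + -α) := (Real.rpow_add ht _ _).symm
      have h5 : t ^ (-α + -α) ≤ t ^ (-α) := Real.rpow_le_rpow_of_exponent_le htgt.le
        (by linarith)
      have hnum : cker α (t/2) * (t/2) ^ (1-α) ≤ 4 * t ^ (-α) := by linarith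
      calc cker α (t/2) * ((t/2) ^ (1-α)/(1-α)) = cker α (t/2) * (t/2) ^ (1-α) / (1-α) := by
            ring
        _ ≤ 4 * t ^ (-α)/(1-α) := by gcongr
    have hB : (2/α) * n ≤ 4 * t ^ (-α) / α := by
      have h1 : n ≤ 2*t ^ (-α) := le_trans (min_le_left _ _) hhalf
      calc (2/α)*n ≤ (2/α)*(2*t ^ (-α)) := mul_le_mul_of_nonneg_left h1 (by positivity)
        _ = 4*t ^ (-α)/α := by ring
    calc (∫ s in (0:ℝ)..(t/2), F s) + ∫ s in (t/2)..t, F s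
        ≤ 4*t ^ (-α)/(1-α) + 4*t ^ (-α)/α := add_le_add (hP1.trans hA) (hP2.trans hB)
      _ = (4/α + 4/(1-α)) * t ^ (-α) := by ring
end

section
/- For α ∈ (0,1) and η ≥ 0, there exists C(α,η) > 0 such that for all t > 0, ∫_0^t min{(t−s)^{−α−1}, (t−s)^{α−1}} · (min{s^{−α},1})^{1+η} ds ≤ C(α,η) · min{t^{−α},1}. -/
open MeasureTheory Real Set

/-! With `K(r) = min (r^(-α-1)) (r^(α-1))` and `w(s) = (min (s^(-α)) 1)^(1+η)` we have
`0 ≤ w ≤ 1` and `w(s) ≤ s^(-α)`. Since `K(r) ≤ r^(α-1)` on `(0, 1]` and `K(r) ≤ r^(-α-1)` on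
`(1, ∞)`, `∫₀^∞ K ≤ 2/α`, and `w ≤ 1` bounds the convolution by `2/α`: this settles `t ≤ 1`.
For `t ≥ 1` split at `s = t/2`: for `s ≤ t/2`, `K(t-s) ≲ t^(-α-1)` against
`∫₀^t s^(-α) ds = t^(1-α)/(1-α)`; for `s ≥ t/2`, `w(s) ≲ t^(-α)` against `∫ K ≤ 2/α`.
Both pieces are `O(t^(-α))`. -/

noncomputable def powKernel (α r : ℝ) : ℝ := min (r ^ (-α - 1)) (r ^ (α - 1))

lemma setIntegral_Ioo_zero_rpow {r : ℝ} (hr : -1 < r) {t : ℝ} (ht : 0 ≤ t) :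
    ∫ s in Ioo 0 t, s ^ r = t ^ (r + 1) / (r + 1) := by
  rw [← integral_Ioc_eq_integral_Ioo, ← intervalIntegral.integral_of_le ht,
    integral_rpow (Or.inl hr), zero_rpow (by linarith), sub_zero]

lemma integrableOn_Ioc_zero_rpow {r : ℝ} (hr : -1 < r) (t : ℝ) :
    IntegrableOn (fun s ↦ s ^ r) (Ioc 0 t) :=
  (intervalIntegral.intervalIntegrable_rpow' hr).1.mono_set Ioc_subset_uIoc

lemma div_two_rpow_le {t p : ℝ} (ht : 0 ≤ t) (hp : -2 ≤ p) : (t / 2) ^ p ≤ 4 * t ^ p := by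
  rw [div_rpow ht zero_le_two, div_eq_mul_inv, mul_comm, ← rpow_neg zero_le_two]
  gcongr
  calc (2 : ℝ) ^ (-p) ≤ 2 ^ (2 : ℝ) := rpow_le_rpow_of_exponent_le one_le_two (by linarith)
    _ = 4 := by norm_num

section Reflection

variable {E : Type*} [NormedAddCommGroup E]

lemma integrableOn_Ioo_comp_sub_left {f : ℝ → E} (t : ℝ) :
    IntegrableOn (fun s ↦ f (t - s)) (Ioo 0 t) ↔ IntegrableOn f (Ioo 0 t) := by
  rw [← (Measure.measurePreserving_sub_left volume t).integrableOn_comp_preimage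
    (measurableEmbedding_subLeft t) (f := f), preimage_const_sub_Ioo, sub_self, sub_zero]
  rfl

lemma setIntegral_Ioo_comp_sub_left [NormedSpace ℝ E] (f : ℝ → E) (t : ℝ) :
    ∫ s in Ioo 0 t, f (t - s) = ∫ s in Ioo 0 t, f s := by
  rw [← (Measure.measurePreserving_sub_left volume t).setIntegral_preimage_emb
    (measurableEmbedding_subLeft t) f, preimage_const_sub_Ioo, sub_self, sub_zero]

end Reflection

section PowKernel

variable {α : ℝ}

lemma powKernel_nonneg {r : ℝ} (hr : 0 ≤ r) : 0 ≤ powKernel α r :=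
  le_min (rpow_nonneg hr _) (rpow_nonneg hr _)

lemma measurable_powKernel : Measurable (powKernel α) := by
  unfold powKernel
  fun_prop

lemma integrableOn_powKernel_of_le {s : Set ℝ} (hs : MeasurableSet s) (hs0 : s ⊆ Ici 0)
    {g : ℝ → ℝ} (hg : IntegrableOn g s) (hle : ∀ r ∈ s, powKernel α r ≤ g r) :
    IntegrableOn (powKernel α) s :=
  hg.mono' measurable_powKernel.aestronglyMeasurable.restrict <| (ae_restrict_iff' hs).2 <|
    .of_forall fun r hr ↦ by rw [norm_of_nonneg (powKernel_nonneg (hs0 hr))]; exact hle r hr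

lemma integrableOn_powKernel_Ioi (hα : 0 < α) : IntegrableOn (powKernel α) (Ioi 0) := by
  rw [← Ioc_union_Ioi_eq_Ioi (show (0 : ℝ) ≤ 1 by norm_num)]
  exact (integrableOn_powKernel_of_le measurableSet_Ioc (fun r hr ↦ hr.1.le)
      (integrableOn_Ioc_zero_rpow (by linarith) 1) fun r _ ↦ min_le_right _ _).union
    (integrableOn_powKernel_of_le measurableSet_Ioi (Ioi_subset_Ici zero_le_one)
      (integrableOn_Ioi_rpow_of_lt (by linarith) one_pos) fun r _ ↦ min_le_left _ _)

lemma setIntegral_powKernel_Ioi_le (hα : 0 < α) : ∫ r in Ioi 0, powKernel α r ≤ 2 / α := by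
  have h01 : (0 : ℝ) ≤ 1 := zero_le_one
  have hint := integrableOn_powKernel_Ioi hα
  have hnear := hint.mono_set (Ioc_subset_Ioi_self : Ioc (0 : ℝ) 1 ⊆ Ioi 0)
  have hfar := hint.mono_set (Ioi_subset_Ioi h01)
  rw [← Ioc_union_Ioi_eq_Ioi h01,
    setIntegral_union (Ioc_disjoint_Ioi le_rfl) measurableSet_Ioi hnear hfar]
  calc _ ≤ (∫ r in Ioc 0 1, r ^ (α - 1)) + ∫ r in Ioi 1, r ^ (-α - 1) :=
        add_le_add
          (setIntegral_mono_on hnear (integrableOn_Ioc_zero_rpow (by linarith) 1)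
            measurableSet_Ioc fun r _ ↦ min_le_right _ _)
          (setIntegral_mono_on hfar (integrableOn_Ioi_rpow_of_lt (by linarith) one_pos)
            measurableSet_Ioi fun r _ ↦ min_le_left _ _)
    _ = 2 / α := by
      rw [integral_Ioc_eq_integral_Ioo, setIntegral_Ioo_zero_rpow (by linarith) zero_le_one,
        integral_Ioi_rpow_of_lt (by linarith) one_pos]
      simp only [sub_add_cancel, one_rpow]
      ring

lemma integrableOn_powKernel_sub (hα : 0 < α) (t : ℝ) :
    IntegrableOn (fun s ↦ powKernel α (t - s)) (Ioo 0 t) :=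
  (integrableOn_Ioo_comp_sub_left t).2
    ((integrableOn_powKernel_Ioi hα).mono_set Ioo_subset_Ioi_self)

lemma setIntegral_powKernel_sub_le (hα : 0 < α) (t : ℝ) :
    ∫ s in Ioo 0 t, powKernel α (t - s) ≤ 2 / α := by
  rw [setIntegral_Ioo_comp_sub_left (powKernel α)]
  refine (setIntegral_mono_set (integrableOn_powKernel_Ioi hα) ?_
    Ioo_subset_Ioi_self.eventuallyLE).trans (setIntegral_powKernel_Ioi_le hα)
  exact (ae_restrict_iff' measurableSet_Ioi).2 (.of_forall fun r hr ↦ powKernel_nonneg hr.le)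

lemma setIntegral_powKernel_sub_mul_le_of_le_one (hα : 0 < α) {t : ℝ} {w : ℝ → ℝ}
    (hw0 : ∀ s ∈ Ioo 0 t, 0 ≤ w s) (hw1 : ∀ s ∈ Ioo 0 t, w s ≤ 1) :
    ∫ s in Ioo 0 t, powKernel α (t - s) * w s ≤ 2 / α := by
  have hK : ∀ s ∈ Ioo 0 t, 0 ≤ powKernel α (t - s) := fun s hs ↦
    powKernel_nonneg (by linarith [hs.2])
  calc _ ≤ ∫ s in Ioo 0 t, powKernel α (t - s) :=
        setIntegral_mono_of_nonneg (fun s hs ↦ mul_nonneg (hK s hs) (hw0 s hs))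
          (fun s hs ↦ mul_le_of_le_one_right (hK s hs) (hw1 s hs))
          (integrableOn_powKernel_sub hα t)
    _ ≤ 2 / α := setIntegral_powKernel_sub_le hα t

lemma powKernel_sub_mul_le (hα : α ∈ Ioo 0 1) {t s w : ℝ} (hs : s ∈ Ioo 0 t) (hw0 : 0 ≤ w)
    (hw : w ≤ s ^ (-α)) :
    powKernel α (t - s) * w ≤
      4 * t ^ (-α - 1) * s ^ (-α) + 4 * t ^ (-α) * powKernel α (t - s) := by
  obtain ⟨hα0, hα1⟩ := hα
  obtain ⟨hs0, hst⟩ := hs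
  have ht0 : 0 < t := hs0.trans hst
  have hK : 0 ≤ powKernel α (t - s) := powKernel_nonneg (by linarith)
  rcases le_total s (t / 2) with hnear | hfar
  · have hKle : powKernel α (t - s) ≤ 4 * t ^ (-α - 1) :=
      calc powKernel α (t - s) ≤ (t - s) ^ (-α - 1) := min_le_left _ _
        _ ≤ (t / 2) ^ (-α - 1) := rpow_le_rpow_of_nonpos (by linarith) (by linarith) (by linarith)
        _ ≤ 4 * t ^ (-α - 1) := div_two_rpow_le ht0.le (by linarith)
    calc powKernel α (t - s) * w ≤ 4 * t ^ (-α - 1) * s ^ (-α) :=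
          mul_le_mul hKle hw hw0 (by positivity)
      _ ≤ _ := le_add_of_nonneg_right (by positivity)
  · have hwle : w ≤ 4 * t ^ (-α) :=
      calc w ≤ s ^ (-α) := hw
        _ ≤ (t / 2) ^ (-α) := rpow_le_rpow_of_nonpos (by linarith) hfar (by linarith)
        _ ≤ 4 * t ^ (-α) := div_two_rpow_le ht0.le (by linarith)
    calc powKernel α (t - s) * w ≤ 4 * t ^ (-α) * powKernel α (t - s) := by
          rw [mul_comm]
          exact mul_le_mul_of_nonneg_right hwle hK
      _ ≤ _ := le_add_of_nonneg_left (by positivity)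

lemma setIntegral_powKernel_sub_mul_le_of_le_rpow_neg (hα : α ∈ Ioo 0 1) {t : ℝ} (ht : 1 ≤ t)
    {w : ℝ → ℝ} (hw0 : ∀ s ∈ Ioo 0 t, 0 ≤ w s) (hw : ∀ s ∈ Ioo 0 t, w s ≤ s ^ (-α)) :
    ∫ s in Ioo 0 t, powKernel α (t - s) * w s ≤ (4 / (1 - α) + 8 / α) * t ^ (-α) := by
  obtain ⟨hα0, hα1⟩ := hα
  have ht0 : 0 < t := by linarith
  have hnear : IntegrableOn (fun s ↦ 4 * t ^ (-α - 1) * s ^ (-α)) (Ioo 0 t) :=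
    ((intervalIntegral.integrableOn_Ioo_rpow_iff ht0).2 (by linarith)).const_mul _
  have hfar := (integrableOn_powKernel_sub hα0 t).const_mul (4 * t ^ (-α))
  calc _ ≤ ∫ s in Ioo 0 t, (4 * t ^ (-α - 1) * s ^ (-α) + 4 * t ^ (-α) * powKernel α (t - s)) :=
        setIntegral_mono_of_nonneg
          (fun s hs ↦ mul_nonneg (powKernel_nonneg (by linarith [hs.2])) (hw0 s hs))
          (fun s hs ↦ powKernel_sub_mul_le ⟨hα0, hα1⟩ hs (hw0 s hs) (hw s hs)) (hnear.add hfar)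
    _ = 4 * t ^ (-α - 1) * (t ^ (1 - α) / (1 - α)) +
          4 * t ^ (-α) * ∫ s in Ioo 0 t, powKernel α (t - s) := by
      rw [integral_add hnear hfar, integral_const_mul, integral_const_mul,
        setIntegral_Ioo_zero_rpow (by linarith) ht0.le, neg_add_eq_sub]
    _ ≤ 4 * t ^ (-α - 1) * (t ^ (1 - α) / (1 - α)) + 4 * t ^ (-α) * (2 / α) := by
      gcongr
      exact setIntegral_powKernel_sub_le hα0 t
    _ = 4 / (1 - α) * t ^ (-α - 1 + (1 - α)) + 8 / α * t ^ (-α) := by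
      rw [rpow_add ht0]
      ring
    _ ≤ (4 / (1 - α) + 8 / α) * t ^ (-α) := by
      rw [add_mul]
      gcongr
      linarith

end PowKernel

theorem convolution_kernel_estimate_eta (α η : ℝ) (hα : α ∈ Set.Ioo (0:ℝ) 1) (hη : 0 ≤ η) :
    ∃ C : ℝ, 0 < C ∧ ∀ t : ℝ, 0 < t →
      ∫ s in Set.Ioo 0 t,
          min ((t - s) ^ (-α - 1)) ((t - s) ^ (α - 1)) * (min (s ^ (-α)) 1) ^ (1 + η)
        ≤ C * min (t ^ (-α)) 1 := by
  obtain ⟨hα0, hα1⟩ := hα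
  have h1α : 0 < 1 - α := sub_pos.2 hα1
  refine ⟨4 / (1 - α) + 8 / α, by positivity, fun t ht ↦ ?_⟩
  have hw0 : ∀ s ∈ Ioo 0 t, 0 ≤ (min (s ^ (-α)) 1) ^ (1 + η) := fun s hs ↦
    rpow_nonneg (le_min (rpow_nonneg hs.1.le _) zero_le_one) _
  have hw : ∀ s ∈ Ioo 0 t, (min (s ^ (-α)) 1) ^ (1 + η) ≤ min (s ^ (-α)) 1 := fun s hs ↦
    rpow_le_self_of_le_one (le_min (rpow_nonneg hs.1.le _) zero_le_one) (min_le_right _ _)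
      (by linarith)
  change ∫ s in Ioo 0 t, powKernel α (t - s) * (min (s ^ (-α)) 1) ^ (1 + η) ≤ _
  rcases le_total t 1 with ht1 | ht1
  · rw [min_eq_right (one_le_rpow_of_pos_of_le_one_of_nonpos ht ht1 (by linarith)), mul_one]
    calc _ ≤ 2 / α := setIntegral_powKernel_sub_mul_le_of_le_one hα0 hw0
          fun s hs ↦ (hw s hs).trans (min_le_right _ _)
      _ ≤ 4 / (1 - α) + 8 / α :=
          le_add_of_nonneg_of_le (by positivity) (by gcongr; norm_num)
  · rw [min_eq_left (rpow_le_one_of_one_le_of_nonpos ht1 (by linarith))]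
    exact setIntegral_powKernel_sub_mul_le_of_le_rpow_neg ⟨hα0, hα1⟩ ht1 hw0
      fun s hs ↦ (hw s hs).trans (min_le_left _ _)
end

section
/- Let A be the 2×2 real matrix with entries a,b,c,d, with a > 0. Fix D₂ > 0, d ∈ ℝ, and D := ad − bc. Then for all sufficiently small D₁ > 0, the minimum of the polynomial p(μ) = D − μ(D₁ d + D₂ a) + D₁ D₂ μ² over μ ∈ ℝ is attained at a positive μ and is negative; consequently there exist 0 < Λ₋ < Λ₊ such that p(μ) < 0 for all μ ∈ (Λ₋, Λ₊). -/
open Set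

set_option maxHeartbeats 1000000 in
theorem turing_determinant_minimum (a b c d D₂ : ℝ) (ha : 0 < a) (hD₂ : 0 < D₂) :
    ∃ ε > 0, ∀ D₁ : ℝ, 0 < D₁ → D₁ < ε →
      (∃ μ₀ : ℝ, 0 < μ₀ ∧
          IsMinOn (fun μ : ℝ => (a * d - b * c) - μ * (D₁ * d + D₂ * a) + D₁ * D₂ * μ ^ 2)
            Set.univ μ₀ ∧
          (a * d - b * c) - μ₀ * (D₁ * d + D₂ * a) + D₁ * D₂ * μ₀ ^ 2 < 0) ∧
      ∃ Lminus Lplus : ℝ, 0 < Lminus ∧ Lminus < Lplus ∧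
        ∀ μ ∈ Set.Ioo Lminus Lplus,
          (a * d - b * c) - μ * (D₁ * d + D₂ * a) + D₁ * D₂ * μ ^ 2 < 0 := by
  set K := a * d - b * c with hK
  refine ⟨min (D₂ * a / (2 * (|d| + 1))) (D₂ * a ^ 2 / (16 * (|K| + 1))), ?_, ?_⟩
  · apply lt_min
    · positivity
    · positivity
  intro D₁ hD₁ hD₁ε
  have hε1 : D₁ < D₂ * a / (2 * (|d| + 1)) := lt_of_lt_of_le hD₁ε (min_le_left _ _)
  have hε2 : D₁ < D₂ * a ^ 2 / (16 * (|K| + 1)) := lt_of_lt_of_le hD₁ε (min_le_right _ _)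
  have hd1 : (0:ℝ) < |d| + 1 := by positivity
  have hK1 : (0:ℝ) < |K| + 1 := by positivity
  have hDD : 0 < D₁ * D₂ := mul_pos hD₁ hD₂
  set s := D₁ * d + D₂ * a with hs_def
  have hds : D₁ * |d| < D₂ * a / 2 := by
    have h3 : D₁ * (2 * (|d| + 1)) < D₂ * a := (lt_div_iff₀ (by positivity)).mp hε1
    nlinarith [abs_nonneg d, hD₁.le]
  have hs : D₂ * a / 2 < s := by
    have : -(D₁ * |d|) ≤ D₁ * d := by
      have := neg_abs_le d
      nlinarith
    nlinarith
  have hs0 : 0 < s := lt_trans (by positivity) hs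
  set μ₀ := s / (2 * (D₁ * D₂)) with hμ₀
  have hμ₀pos : 0 < μ₀ := by positivity
  set m := K - s ^ 2 / (4 * (D₁ * D₂)) with hm
  have hKle : D₁ * K < D₂ * a ^ 2 / 16 := by
    have h1 : D₁ * K ≤ D₁ * |K| := by
      have := le_abs_self K
      nlinarith
    have h2 : D₁ * |K| < D₂ * a ^ 2 / 16 := by
      have h3 : D₁ * (16 * (|K| + 1)) < D₂ * a ^ 2 :=
        (lt_div_iff₀ (by positivity)).mp hε2
      nlinarith [abs_nonneg K]
    exact lt_of_le_of_lt h1 h2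
  have hmneg : m < 0 := by
    rw [hm, sub_neg]
    rw [lt_div_iff₀ (by positivity : (0:ℝ) < 4 * (D₁ * D₂))]
    nlinarith [hs, mul_pos hD₂ ha]
  have key : ∀ μ : ℝ, K - μ * s + D₁ * D₂ * μ ^ 2 = D₁ * D₂ * (μ - μ₀) ^ 2 + m := by
    intro μ
    rw [hm, hμ₀]
    field_simp
    ring
  clear_value K s μ₀ m
  refine ⟨⟨μ₀, hμ₀pos, ?_, ?_⟩, ?_⟩
  · intro μ _
    simp only [Set.mem_setOf_eq]
    rw [key μ, key μ₀]
    nlinarith [sq_nonneg (μ - μ₀), hDD]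
  · rw [key μ₀]; simp; linarith
  · obtain ⟨δ, hδpos, hδle, hδsq⟩ :
        ∃ δ : ℝ, 0 < δ ∧ δ ≤ μ₀ / 2 ∧ D₁ * D₂ * δ ^ 2 ≤ -m := by
      have hmpos : 0 < -m / (D₁ * D₂) := div_pos (by linarith) hDD
      refine ⟨min (μ₀ / 2) (Real.sqrt (-m / (D₁ * D₂))),
        lt_min (by positivity) (Real.sqrt_pos.mpr hmpos), min_le_left _ _, ?_⟩
      have h1 : min (μ₀ / 2) (Real.sqrt (-m / (D₁ * D₂))) ≤ Real.sqrt (-m / (D₁ * D₂)) :=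
        min_le_right _ _
      have h0 : 0 ≤ min (μ₀ / 2) (Real.sqrt (-m / (D₁ * D₂))) :=
        le_min (by positivity) (Real.sqrt_nonneg _)
      have h2 : min (μ₀ / 2) (Real.sqrt (-m / (D₁ * D₂))) ^ 2 ≤ -m / (D₁ * D₂) := by
        have h4 := Real.sq_sqrt hmpos.le
        nlinarith
      have h3 := mul_le_mul_of_nonneg_left h2 hDD.le
      have h5 : D₁ * D₂ * (-m / (D₁ * D₂)) = -m := by
        field_simp
      linarith
    refine ⟨μ₀ - δ, μ₀ + δ, ?_, by linarith, ?_⟩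
    · linarith
    · intro μ hμ
      rw [key μ]
      have h1 : (μ - μ₀) ^ 2 < δ ^ 2 := by
        rcases hμ with ⟨h2, h3⟩
        nlinarith
      nlinarith [hDD]
end

section
/- Let α ∈ (0,1), λ ∈ ℂ, and suppose there exists m > 0 such that |E_α(λ t^α)| ≤ m·min{t^{−α},1} and |t^{α−1} E_{α,α}(λ t^α)| ≤ m·min{t^{−α−1}, t^{α−1}} for all t > 0. If f : [0,∞) → ℂ is continuous and bounded with lim_{t→∞} f(t) = 0, then the function u(t) = E_α(λ t^α) u_0 + ∫_0^t (t−s)^{α−1} E_{α,α}(λ (t−s)^α) f(s) ds satisfies lim_{t→∞} u(t) = 0 for every u_0 ∈ ℂ. -/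
/-!
Bound the Duhamel term by substituting `r = t - s`: its norm is at most
`∫₀^∞ 1_{r ≤ t} κ(r) ‖f(t - r)‖ dr`, where `κ(r) = m min(r^{-α-1}, r^{α-1})` is integrable on
`(0, ∞)` (the first branch at infinity, the second at the origin). Since `f` is bounded, `B κ`
dominates these integrands, and since `f(t - r) → 0` for each fixed `r`, dominated convergence
makes them tend to `0`. The free term `F t u₀` is `O(t^{-α})`.
-/

open MeasureTheory Filter Real Set Topology

theorem integrableOn_Ioi_min_rpow {a b : ℝ} (ha : a < -1) (hb : -1 < b) :
    IntegrableOn (fun r : ℝ => min (r ^ a) (r ^ b)) (Ioi 0) := by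
  have hmeas : AEStronglyMeasurable (fun r : ℝ => min (r ^ a) (r ^ b)) :=
    ((measurable_id.pow_const a).min (measurable_id.pow_const b)).aestronglyMeasurable
  have hnorm (r : ℝ) (hr : 0 < r) : ‖min (r ^ a) (r ^ b)‖ = min (r ^ a) (r ^ b) :=
    Real.norm_of_nonneg (le_min (rpow_nonneg hr.le a) (rpow_nonneg hr.le b))
  rw [← Ioc_union_Ioi_eq_Ioi zero_le_one]
  refine IntegrableOn.union ?_ ?_
  · refine Integrable.mono' (intervalIntegral.intervalIntegrable_rpow' hb).1 hmeas.restrict ?_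
    filter_upwards [ae_restrict_mem measurableSet_Ioc] with r hr
    exact (hnorm r hr.1).trans_le (min_le_right _ _)
  · refine Integrable.mono' (integrableOn_Ioi_rpow_of_lt ha zero_lt_one) hmeas.restrict ?_
    filter_upwards [ae_restrict_mem measurableSet_Ioi] with r hr
    exact (hnorm r (zero_lt_one.trans hr)).trans_le (min_le_left _ _)

section Duhamel

variable {A : Type*} [NormedRing A] [NormedSpace ℝ A]

theorem norm_integral_comp_sub_mul_le {κ : ℝ → ℝ} (hκ : IntegrableOn κ (Ioi 0)) {G f : ℝ → A}
    (hG : ∀ r, 0 < r → ‖G r‖ ≤ κ r) (hf : Continuous f) {B : ℝ} (hB : ∀ t, ‖f t‖ ≤ B)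
    {t : ℝ} (ht : 0 ≤ t) :
    ‖∫ s in (0:ℝ)..t, G (t - s) * f s‖ ≤
      ∫ r in Ioi 0, (Iic t).indicator (fun r => κ r * ‖f (t - r)‖) r := by
  have hsub : ∫ s in (0:ℝ)..t, G (t - s) * f s = ∫ r in (0:ℝ)..t, G r * f (t - r) := by
    simpa using intervalIntegral.integral_comp_sub_left (a := 0) (b := t)
      (fun r => G r * f (t - r)) t
  have hint : IntegrableOn (fun r => κ r * ‖f (t - r)‖) (Ioc 0 t) :=
    (hκ.mono_set Ioc_subset_Ioi_self).mul_bdd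
      (hf.comp (continuous_sub_left t)).norm.aestronglyMeasurable
      (ae_of_all _ fun r => (norm_norm _).trans_le (hB _))
  rw [hsub, setIntegral_indicator measurableSet_Iic, Ioi_inter_Iic,
    ← intervalIntegral.integral_of_le ht]
  refine intervalIntegral.norm_integral_le_of_norm_le ht (ae_of_all _ fun r hr => ?_)
    ((intervalIntegrable_iff_integrableOn_Ioc_of_le ht).2 hint)
  exact (norm_mul_le _ _).trans (mul_le_mul_of_nonneg_right (hG r hr.1) (norm_nonneg _))

theorem tendsto_integral_comp_sub_mul_atTop {κ : ℝ → ℝ} (hκ : IntegrableOn κ (Ioi 0))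
    {G f : ℝ → A} (hG : ∀ r, 0 < r → ‖G r‖ ≤ κ r) (hf : Continuous f) {B : ℝ}
    (hB : ∀ t, ‖f t‖ ≤ B) (hf0 : Tendsto f atTop (𝓝 0)) :
    Tendsto (fun t => ∫ s in (0:ℝ)..t, G (t - s) * f s) atTop (𝓝 0) := by
  have hmeas (t : ℝ) : AEStronglyMeasurable
      ((Iic t).indicator fun r => κ r * ‖f (t - r)‖) (volume.restrict (Ioi 0)) :=
    (hκ.aestronglyMeasurable.mul
      (hf.comp (continuous_sub_left t)).norm.aestronglyMeasurable).indicator measurableSet_Iic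
  have hbound (t : ℝ) : ∀ᵐ r ∂volume.restrict (Ioi 0),
      ‖(Iic t).indicator (fun r => κ r * ‖f (t - r)‖) r‖ ≤ B * κ r := by
    filter_upwards [ae_restrict_mem measurableSet_Ioi] with r hr
    have hκr : 0 ≤ κ r := (norm_nonneg _).trans (hG r hr)
    refine (norm_indicator_le_norm_self _ _).trans ?_
    rw [norm_mul, norm_norm, Real.norm_of_nonneg hκr, mul_comm]
    exact mul_le_mul_of_nonneg_right (hB _) hκr
  have hlim (r : ℝ) : Tendsto (fun t => (Iic t).indicator (fun r => κ r * ‖f (t - r)‖) r)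
      atTop (𝓝 0) := by
    have hshift : Tendsto (fun t => κ r * ‖f (t - r)‖) atTop (𝓝 0) := by
      have hsub : Tendsto (fun t => t - r) atTop atTop :=
        tendsto_atTop_add_const_right _ _ tendsto_id
      simpa using (hf0.comp hsub).norm.const_mul (κ r)
    refine hshift.congr' ?_
    filter_upwards [eventually_ge_atTop r] with t ht
    exact (indicator_of_mem (mem_Iic.2 ht) (fun r => κ r * ‖f (t - r)‖)).symm
  have hmaj := tendsto_integral_filter_of_dominated_convergence _ (.of_forall hmeas)
    (.of_forall hbound) (hκ.const_mul B) (.of_forall hlim)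
  rw [integral_zero] at hmaj
  refine squeeze_zero_norm' ?_ hmaj
  filter_upwards [eventually_ge_atTop 0] with t ht
  exact norm_integral_comp_sub_mul_le hκ hG hf hB ht

end Duhamel

theorem duhamel_decay_general (α : ℝ) (hα : α ∈ Set.Ioo (0:ℝ) 1)
    (F G : ℝ → ℂ) (m : ℝ)
    (hF : ∀ t : ℝ, 0 < t → ‖F t‖ ≤ m * min (t ^ (-α)) 1)
    (hG : ∀ t : ℝ, 0 < t → ‖G t‖ ≤ m * min (t ^ (-α - 1)) (t ^ (α - 1)))
    (f : ℝ → ℂ) (hf : Continuous f) (hfb : ∃ B : ℝ, ∀ t : ℝ, ‖f t‖ ≤ B)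
    (hf0 : Tendsto f atTop (nhds 0)) (u₀ : ℂ) :
    Tendsto (fun t : ℝ => F t * u₀ + ∫ s in (0:ℝ)..t, G (t - s) * f s) atTop (nhds 0) := by
  obtain ⟨B, hB⟩ := hfb
  have hF0 : Tendsto (fun t => F t * u₀) atTop (𝓝 0) := by
    have hmaj : Tendsto (fun t : ℝ => m * min (t ^ (-α)) 1 * ‖u₀‖) atTop (𝓝 0) := by
      have hmin := (tendsto_rpow_neg_atTop hα.1).min (tendsto_const_nhds (x := (1 : ℝ)))
      simpa using (hmin.const_mul m).mul_const ‖u₀‖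
    refine squeeze_zero_norm' ?_ hmaj
    filter_upwards [eventually_gt_atTop 0] with t ht
    rw [norm_mul]
    exact mul_le_mul_of_nonneg_right (hF t ht) (norm_nonneg _)
  have hκ : IntegrableOn (fun r : ℝ => m * min (r ^ (-α - 1)) (r ^ (α - 1))) (Ioi 0) :=
    (integrableOn_Ioi_min_rpow (by linarith [hα.1]) (by linarith [hα.1])).const_mul m
  simpa using hF0.add (tendsto_integral_comp_sub_mul_atTop hκ hG hf hB hf0)

/-- `F t` plays the role of `E_α(λ t^α)` and `G t` the role of `t^{α-1} E_{α,α}(λ t^α)`. -/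
theorem duhamel_decay (α : ℝ) (hα : α ∈ Set.Ioo (0:ℝ) 1) (lam : ℂ)
    (F G : ℝ → ℂ) (m : ℝ) (hm : 0 < m)
    (hF : ∀ t : ℝ, 0 < t → ‖F t‖ ≤ m * min (t ^ (-α)) 1)
    (hG : ∀ t : ℝ, 0 < t → ‖G t‖ ≤ m * min (t ^ (-α - 1)) (t ^ (α - 1)))
    (f : ℝ → ℂ) (hf : Continuous f) (hfb : ∃ B : ℝ, ∀ t : ℝ, ‖f t‖ ≤ B)
    (hf0 : Tendsto f atTop (nhds 0)) (u₀ : ℂ) :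
    Tendsto (fun t : ℝ => F t * u₀ + ∫ s in (0:ℝ)..t, G (t - s) * f s) atTop (nhds 0) :=
  duhamel_decay_general α hα F G m hF hG f hf hfb hf0 u₀
end

section
/- Let n ∈ ℕ, λ ∈ ℂ with |arg λ| > απ/2 where α ∈ (0,1), and suppose |E_α(λ t^α)| ≤ m·min{t^{−α},1} and |t^{α−1}E_{α,α}(λ t^α)| ≤ m·min{t^{−α−1},t^{α−1}} for all t > 0. Define recursively u_n(t) = E_α(λ t^α) u_n^0 and, for i < n, u_i(t) = E_α(λ t^α) u_i^0 + ∫_0^t (t−s)^{α−1} E_{α,α}(λ(t−s)^α) u_{i+1}(s) ds. Then there exists C > 0 (depending on α, λ, n) such that |u_i(t)| ≤ C max_j |u_j^0| · min{t^{−α},1} for all t > 0 and all i. -/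
/-! By downward induction along the block, each `u i` is a source term `F t * u₀ i`, which decays
like `min (t ^ (-α)) 1`, plus the convolution of the kernel `G` with `u (i + 1)`. So everything
rests on the convolution estimate for the weights `k = kernelWeight α` and `h = decayWeight α`:
`∫₀ᵗ k(t - s) h(s) ds ≤ 2 ^ α (1 + 2 / α) h(t)`. Split the integral
at `t / 2`. On `[t / 2, t]`, `h(s) ≤ h(t / 2) ≤ 2 ^ α h(t)` and `∫₀^∞ k ≤ 2 / α`. On `[0, t / 2]`,
`k(t - s) h(s) ≤ k(t / 2)`, and `r k(r) = min (r ^ (-α)) (r ^ α) ≤ h(r)`. -/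

open MeasureTheory Real Set intervalIntegral

noncomputable def decayWeight (α t : ℝ) : ℝ := min (t ^ (-α)) 1

noncomputable def kernelWeight (α t : ℝ) : ℝ := min (t ^ (-α - 1)) (t ^ (α - 1))

lemma IntervalIntegrable.of_nonneg_of_le {f g : ℝ → ℝ} {a b : ℝ} (hab : a ≤ b)
    (hg : IntervalIntegrable g volume a b) (hf : Measurable f)
    (hfg : ∀ x ∈ Ioc a b, 0 ≤ f x ∧ f x ≤ g x) : IntervalIntegrable f volume a b := by
  refine hg.mono_fun' hf.aestronglyMeasurable.restrict ?_
  filter_upwards [ae_restrict_mem measurableSet_uIoc] with x hx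
  rw [uIoc_of_le hab] at hx
  obtain ⟨hf0, hfg⟩ := hfg x hx
  rwa [norm_of_nonneg hf0]

lemma integral_rpow_sub_one_le {α y : ℝ} (hα : 0 < α) (hy : 0 ≤ y) (hy1 : y ≤ 1) :
    ∫ s in (0:ℝ)..y, s ^ (α - 1) ≤ 1 / α := by
  rw [integral_rpow (Or.inl (by linarith)), sub_add_cancel, zero_rpow hα.ne']
  simpa using div_le_div_of_nonneg_right (rpow_le_one hy hy1 hα.le) hα.le

lemma integral_rpow_neg_sub_one_le {α x : ℝ} (hα : 0 < α) (hx : 1 ≤ x) :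
    ∫ s in (1:ℝ)..x, s ^ (-α - 1) ≤ 1 / α := by
  have h0 : (0:ℝ) ∉ uIcc 1 x := by rw [uIcc_of_le hx]; exact fun h ↦ by linarith [h.1]
  rw [integral_rpow (Or.inr ⟨by linarith, h0⟩), sub_add_cancel, one_rpow, div_neg,
    ← neg_div, neg_sub]
  exact div_le_div_of_nonneg_right (by linarith [rpow_nonneg (zero_le_one.trans hx) (-α)]) hα.le

section Weights

variable {α : ℝ}

lemma decayWeight_nonneg (α : ℝ) {t : ℝ} (ht : 0 ≤ t) : 0 ≤ decayWeight α t :=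
  le_min (rpow_nonneg ht _) zero_le_one

lemma decayWeight_le_one (α t : ℝ) : decayWeight α t ≤ 1 := min_le_right _ _

lemma kernelWeight_nonneg (α : ℝ) {t : ℝ} (ht : 0 ≤ t) : 0 ≤ kernelWeight α t :=
  le_min (rpow_nonneg ht _) (rpow_nonneg ht _)

@[fun_prop]
lemma measurable_decayWeight (α : ℝ) : Measurable (decayWeight α) := by
  unfold decayWeight; fun_prop

@[fun_prop]
lemma measurable_kernelWeight (α : ℝ) : Measurable (kernelWeight α) := by
  unfold kernelWeight; fun_prop

lemma decayWeight_anti (hα : 0 ≤ α) {s t : ℝ} (hs : 0 < s) (hst : s ≤ t) :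
    decayWeight α t ≤ decayWeight α s :=
  min_le_min_right _ (rpow_le_rpow_of_nonpos hs hst (by linarith))

lemma kernelWeight_anti (hα : α ≤ 1) (hα' : -1 ≤ α) {s t : ℝ} (hs : 0 < s) (hst : s ≤ t) :
    kernelWeight α t ≤ kernelWeight α s :=
  min_le_min (rpow_le_rpow_of_nonpos hs hst (by linarith))
    (rpow_le_rpow_of_nonpos hs hst (by linarith))

lemma decayWeight_half_le (hα : 0 ≤ α) {t : ℝ} (ht : 0 < t) :
    decayWeight α (t / 2) ≤ 2 ^ α * decayWeight α t := by
  have h2 : (1:ℝ) ≤ 2 ^ α := one_le_rpow (by norm_num) hα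
  have hdiv : (t / 2) ^ (-α) = 2 ^ α * t ^ (-α) := by
    rw [div_rpow ht.le zero_le_two, rpow_neg zero_le_two]; field_simp
  rw [decayWeight, decayWeight, hdiv, mul_min_of_nonneg _ _ (by positivity), mul_one]
  exact min_le_min_left _ h2

lemma mul_kernelWeight_le_decayWeight (hα : 0 ≤ α) {t : ℝ} (ht : 0 < t) :
    t * kernelWeight α t ≤ decayWeight α t := by
  have hneg : t * t ^ (-α - 1) = t ^ (-α) := by
    rw [mul_comm, ← rpow_add_one ht.ne']; ring_nf
  have hpos : t * t ^ (α - 1) = t ^ α := by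
    rw [mul_comm, ← rpow_add_one ht.ne']; ring_nf
  rw [kernelWeight, mul_min_of_nonneg _ _ ht.le, hneg, hpos]
  refine le_min (min_le_left _ _) ?_
  rcases le_total t 1 with ht1 | ht1
  · exact (min_le_right _ _).trans (rpow_le_one ht.le ht1 hα)
  · exact (min_le_left _ _).trans (rpow_le_one_of_one_le_of_nonpos ht1 (by linarith))

lemma intervalIntegrable_kernelWeight (hα : 0 < α) {a b : ℝ} (ha : 0 ≤ a) (hab : a ≤ b) :
    IntervalIntegrable (kernelWeight α) volume a b :=
  .of_nonneg_of_le hab (intervalIntegrable_rpow' (r := α - 1) (by linarith))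
    (measurable_kernelWeight α)
    fun _ hs ↦ ⟨kernelWeight_nonneg α (ha.trans hs.1.le), min_le_right _ _⟩

lemma integral_kernelWeight_le (hα : 0 < α) {x : ℝ} (hx : 0 ≤ x) :
    ∫ s in (0:ℝ)..x, kernelWeight α s ≤ 2 / α := by
  have near_zero : ∀ y, 0 ≤ y → y ≤ 1 → ∫ s in (0:ℝ)..y, kernelWeight α s ≤ 1 / α :=
    fun y hy hy1 ↦ (integral_mono_on hy (intervalIntegrable_kernelWeight hα le_rfl hy)
      (intervalIntegrable_rpow' (by linarith)) fun _ _ ↦ min_le_right _ _).trans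
      (integral_rpow_sub_one_le hα hy hy1)
  rcases le_total x 1 with hx1 | hx1
  · exact (near_zero x hx hx1).trans (div_le_div_of_nonneg_right one_le_two hα.le)
  have near_infty : ∫ s in (1:ℝ)..x, kernelWeight α s ≤ 1 / α := by
    refine (integral_mono_on hx1 (intervalIntegrable_kernelWeight hα zero_le_one hx1)
      (intervalIntegrable_rpow (Or.inr ?_)) fun _ _ ↦ min_le_left _ _).trans
      (integral_rpow_neg_sub_one_le hα hx1)
    rw [uIcc_of_le hx1]; exact fun h ↦ by linarith [h.1]
  rw [← integral_add_adjacent_intervals (intervalIntegrable_kernelWeight hα le_rfl zero_le_one)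
    (intervalIntegrable_kernelWeight hα zero_le_one hx1)]
  linarith [near_zero 1 zero_le_one le_rfl, show (2:ℝ) / α = 1 / α + 1 / α by ring]

end Weights

section Convolution

variable {α : ℝ}

lemma intervalIntegrable_kernelWeight_sub (hα : 0 < α) {t : ℝ} (ht : 0 ≤ t) :
    IntervalIntegrable (fun s ↦ kernelWeight α (t - s)) volume 0 t := by
  simpa using ((intervalIntegrable_kernelWeight hα le_rfl ht).comp_sub_left t).symm

lemma intervalIntegrable_kernelWeight_sub_mul_decayWeight (hα : 0 < α) {t : ℝ} (ht : 0 ≤ t) :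
    IntervalIntegrable (fun s ↦ kernelWeight α (t - s) * decayWeight α s) volume 0 t :=
  .of_nonneg_of_le ht (intervalIntegrable_kernelWeight_sub hα ht) (by fun_prop)
    fun s hs ↦ ⟨mul_nonneg (kernelWeight_nonneg α (by linarith [hs.2]))
      (decayWeight_nonneg α hs.1.le),
      mul_le_of_le_one_right (kernelWeight_nonneg α (by linarith [hs.2]))
        (decayWeight_le_one α s)⟩

theorem integral_kernelWeight_sub_mul_decayWeight_le (hα : 0 < α) (hα1 : α ≤ 1) {t : ℝ}
    (ht : 0 < t) :
    ∫ s in (0:ℝ)..t, kernelWeight α (t - s) * decayWeight α s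
      ≤ 2 ^ α * (1 + 2 / α) * decayWeight α t := by
  set r := t / 2 with hr_def
  have hr : 0 < r := by positivity
  have hrt : r ≤ t := by linarith
  have htr : t - r = r := by rw [hr_def]; ring
  have hint := intervalIntegrable_kernelWeight_sub_mul_decayWeight hα ht.le
  have hr_mem : r ∈ uIcc 0 t := mem_uIcc_of_le hr.le hrt
  have hsub_left : uIcc 0 r ⊆ uIcc 0 t := uIcc_subset_uIcc left_mem_uIcc hr_mem
  have hsub_right : uIcc r t ⊆ uIcc 0 t := uIcc_subset_uIcc hr_mem right_mem_uIcc
  have near_zero : ∫ s in (0:ℝ)..r, kernelWeight α (t - s) * decayWeight α s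
      ≤ 2 ^ α * decayWeight α t :=
    calc _ ≤ ∫ _ in (0:ℝ)..r, kernelWeight α r :=
          integral_mono_on hr.le (hint.mono_set hsub_left) intervalIntegrable_const
            fun s hs ↦ (mul_le_of_le_one_right (kernelWeight_nonneg α (by linarith [hs.2]))
              (decayWeight_le_one α s)).trans
              (kernelWeight_anti hα1 (by linarith) hr (by linarith [hs.2]))
      _ = r * kernelWeight α r := by simp
      _ ≤ decayWeight α r := mul_kernelWeight_le_decayWeight hα.le hr
      _ ≤ 2 ^ α * decayWeight α t := decayWeight_half_le hα.le ht
  have near_t : ∫ s in r..t, kernelWeight α (t - s) * decayWeight α s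
      ≤ 2 / α * (2 ^ α * decayWeight α t) :=
    calc _ ≤ ∫ s in r..t, kernelWeight α (t - s) * decayWeight α r :=
          integral_mono_on hrt (hint.mono_set hsub_right)
            (((intervalIntegrable_kernelWeight_sub hα ht.le).mono_set hsub_right).mul_const _)
            fun s hs ↦ mul_le_mul_of_nonneg_left (decayWeight_anti hα.le hr hs.1)
              (kernelWeight_nonneg α (by linarith [hs.2]))
      _ = (∫ s in (0:ℝ)..r, kernelWeight α s) * decayWeight α r := by
          rw [intervalIntegral.integral_mul_const, integral_comp_sub_left, sub_self, htr]
      _ ≤ 2 / α * (2 ^ α * decayWeight α t) :=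
          mul_le_mul (integral_kernelWeight_le hα hr.le) (decayWeight_half_le hα.le ht)
            (decayWeight_nonneg α hr.le) (by positivity)
  rw [← integral_add_adjacent_intervals (hint.mono_set hsub_left) (hint.mono_set hsub_right)]
  linarith [show 2 ^ α * (1 + 2 / α) * decayWeight α t
    = 2 ^ α * decayWeight α t + 2 / α * (2 ^ α * decayWeight α t) by ring]

end Convolution

lemma norm_integral_kernel_mul_le_decayWeight {E : Type*} [NormedRing E] [NormedAlgebra ℝ E]
    {α m A : ℝ} (hα : 0 < α) (hα1 : α ≤ 1) (hm : 0 ≤ m) (hA : 0 ≤ A) {G v : ℝ → E}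
    (hG : ∀ t, 0 < t → ‖G t‖ ≤ m * kernelWeight α t)
    (hv : ∀ s, 0 < s → ‖v s‖ ≤ A * decayWeight α s) {t : ℝ} (ht : 0 < t) :
    ‖∫ s in (0:ℝ)..t, G (t - s) * v s‖ ≤ m * A * (2 ^ α * (1 + 2 / α)) * decayWeight α t := by
  by_cases hint : IntervalIntegrable (fun s ↦ G (t - s) * v s) volume 0 t
  swap
  · rw [integral_undef hint, norm_zero]
    have := decayWeight_nonneg α ht.le
    positivity
  have hpointwise : ∀ s ∈ Ioo 0 t,
      ‖G (t - s) * v s‖ ≤ m * A * (kernelWeight α (t - s) * decayWeight α s) := fun s hs ↦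
    calc ‖G (t - s) * v s‖ ≤ ‖G (t - s)‖ * ‖v s‖ := norm_mul_le _ _
      _ ≤ (m * kernelWeight α (t - s)) * (A * decayWeight α s) :=
          mul_le_mul (hG _ (sub_pos.2 hs.2)) (hv s hs.1) (norm_nonneg _)
            (mul_nonneg hm (kernelWeight_nonneg α (sub_pos.2 hs.2).le))
      _ = _ := by ring
  calc _ ≤ ∫ s in (0:ℝ)..t, ‖G (t - s) * v s‖ := norm_integral_le_integral_norm ht.le
    _ ≤ ∫ s in (0:ℝ)..t, m * A * (kernelWeight α (t - s) * decayWeight α s) :=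
        integral_mono_on_of_le_Ioo ht.le hint.norm
          ((intervalIntegrable_kernelWeight_sub_mul_decayWeight hα ht.le).const_mul _) hpointwise
    _ = m * A * ∫ s in (0:ℝ)..t, kernelWeight α (t - s) * decayWeight α s :=
        intervalIntegral.integral_const_mul _ _
    _ ≤ _ := by
        rw [mul_assoc (m * A)]
        exact mul_le_mul_of_nonneg_left
          (integral_kernelWeight_sub_mul_decayWeight_le hα hα1 ht) (mul_nonneg hm hA)

lemma norm_mul_le_mul_decayWeight {E : Type*} [NormedRing E] {α m M t : ℝ} {F : ℝ → E} {c : E}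
    (hm : 0 ≤ m) (hF : ∀ t, 0 < t → ‖F t‖ ≤ m * decayWeight α t) (hc : ‖c‖ ≤ M) (ht : 0 < t) :
    ‖F t * c‖ ≤ m * M * decayWeight α t :=
  (norm_mul_le _ _).trans <| by
    rw [mul_right_comm]
    exact mul_le_mul (hF t ht) hc (norm_nonneg _) (mul_nonneg hm (decayWeight_nonneg α ht.le))

/-- `F t` plays the role of `E_α(λ t^α)` and `G t` of `t^{α-1} E_{α,α}(λ t^α)`. -/
theorem jordan_block_decay_general (α : ℝ) (hα : α ∈ Set.Ioo (0:ℝ) 1)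
    (F G : ℝ → ℂ) (m : ℝ)
    (hF : ∀ t : ℝ, 0 < t → ‖F t‖ ≤ m * min (t ^ (-α)) 1)
    (hG : ∀ t : ℝ, 0 < t → ‖G t‖ ≤ m * min (t ^ (-α - 1)) (t ^ (α - 1)))
    (n : ℕ) (u₀ : Fin (n + 1) → ℂ) (u : Fin (n + 1) → ℝ → ℂ)
    (hlast : ∀ t : ℝ, u (Fin.last n) t = F t * u₀ (Fin.last n))
    (hrec : ∀ i : Fin (n + 1), (i : ℕ) < n → ∀ t : ℝ, 0 < t →
      u i t = F t * u₀ i + ∫ s in (0:ℝ)..t, G (t - s) * u (i + 1) s) :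
    ∃ C : ℝ, 0 < C ∧ ∀ t : ℝ, 0 < t → ∀ i : Fin (n + 1),
      ‖u i t‖ ≤ C * (⨆ j : Fin (n + 1), ‖u₀ j‖) * min (t ^ (-α)) 1 := by
  obtain ⟨hα0, hα1⟩ := hα
  have hm : 0 ≤ m := by simpa using (norm_nonneg _).trans (hF 1 one_pos)
  set M := ⨆ j : Fin (n + 1), ‖u₀ j‖
  have hM : ∀ j, ‖u₀ j‖ ≤ M := le_ciSup (Set.finite_range _).bddAbove
  have hM0 : 0 ≤ M := (norm_nonneg _).trans (hM 0)
  have hbound : ∀ i, ∃ C, 0 ≤ C ∧ ∀ t, 0 < t → ‖u i t‖ ≤ C * M * decayWeight α t := by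
    intro i
    induction i using Fin.reverseInduction with
    | last =>
      exact ⟨m, hm, fun t ht ↦ (hlast t).symm ▸ norm_mul_le_mul_decayWeight hm hF (hM _) ht⟩
    | cast i ih =>
      obtain ⟨C, hC, hu⟩ := ih
      refine ⟨m + m * C * (2 ^ α * (1 + 2 / α)), by positivity, fun t ht ↦ ?_⟩
      rw [hrec _ i.isLt t ht, Fin.coeSucc_eq_succ]
      calc _ ≤ m * M * decayWeight α t
            + m * (C * M) * (2 ^ α * (1 + 2 / α)) * decayWeight α t :=
            (norm_add_le _ _).trans <| add_le_add (norm_mul_le_mul_decayWeight hm hF (hM _) ht)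
              (norm_integral_kernel_mul_le_decayWeight hα0 hα1.le hm (by positivity) hG
                (fun s hs ↦ mul_assoc C M _ ▸ hu s hs) ht)
        _ = _ := by ring
  choose C _ hu using hbound
  obtain ⟨B, hB⟩ := (Set.finite_range C).bddAbove
  refine ⟨max B 1, by positivity, fun t ht i ↦ (hu i t ht).trans ?_⟩
  exact mul_le_mul_of_nonneg_right (mul_le_mul_of_nonneg_right
    ((hB ⟨i, rfl⟩).trans (le_max_left _ _)) hM0) (decayWeight_nonneg α ht.le)

/-- Decay estimate for the fractional resolvent on a Jordan block of size `n+1`.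
`F t` plays the role of `E_α(λ t^α)` and `G t` of `t^{α-1} E_{α,α}(λ t^α)`. -/
theorem jordan_block_decay (α : ℝ) (hα : α ∈ Set.Ioo (0:ℝ) 1) (lam : ℂ)
    (harg : α * π / 2 < |Complex.arg lam|)
    (F G : ℝ → ℂ) (m : ℝ) (hm : 0 < m)
    (hF : ∀ t : ℝ, 0 < t → ‖F t‖ ≤ m * min (t ^ (-α)) 1)
    (hG : ∀ t : ℝ, 0 < t → ‖G t‖ ≤ m * min (t ^ (-α - 1)) (t ^ (α - 1)))
    (n : ℕ) (u₀ : Fin (n + 1) → ℂ) (u : Fin (n + 1) → ℝ → ℂ)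
    (hlast : ∀ t : ℝ, u (Fin.last n) t = F t * u₀ (Fin.last n))
    (hrec : ∀ i : Fin (n + 1), (i : ℕ) < n → ∀ t : ℝ, 0 < t →
      u i t = F t * u₀ i + ∫ s in (0:ℝ)..t, G (t - s) * u (i + 1) s) :
    ∃ C : ℝ, 0 < C ∧ ∀ t : ℝ, 0 < t → ∀ i : Fin (n + 1),
      ‖u i t‖ ≤ C * (⨆ j : Fin (n + 1), ‖u₀ j‖) * min (t ^ (-α)) 1 :=
  jordan_block_decay_general α hα F G m hF hG n u₀ u hlast hrec
end

section
/- Let X be a Banach space, S_α(t), P_α(t) families of bounded operators on X, and K > 0 with ‖S_α(t)v‖ ≤ K‖v‖·min{t^{−α},1} and ‖t^{α−1}P_α(t)v‖ ≤ K‖v‖·min{t^{−α−1},t^{α−1}} for all v ∈ X, t > 0. Suppose f : [0,∞) × X → X satisfies: for every κ > 0 there is R > 0 with ‖f(t,u)‖ ≤ κ‖u‖ whenever ‖u‖ < R. Then there exist δ > 0 and C > 0 such that any continuous u : [0,∞) → X solving u(t) = S_α(t)u_0 + ∫_0^t (t−s)^{α−1} P_α(t−s) f(s,u(s)) ds with ‖u_0‖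 ≤ δ satisfies ‖u(t)‖ ≤ C‖u_0‖·min{t^{−α},1} for all t > 0. -/
open MeasureTheory Real Set

/-!
Write `w t = min (t^{-α}) 1` and `k r = min (r^{-α-1}) (r^{α-1})`. While `‖u‖` stays below the
radius `R` on which `‖f t v‖ ≤ κ ‖v‖`, the linear estimates turn the mild formulation into
`‖u t‖ ≤ K ‖u₀‖ w t + K κ N ∫₀ᵗ k (t - s) w s ds`, where `N` bounds `‖u‖ / w` on the time interval.
The convolution estimate `∫₀ᵗ k (t - s) w s ds ≤ M w t` comes from splitting at `t / 2`: on
`[0, t/2]` use `k (t - s) ≤ k (t/2)` and `w s ≤ s^{-α}`, on `[t/2, t]` use `w s ≤ w (t/2) ≤ 2 w t`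
and `∫₀^∞ k ≤ 2 / α`. Choosing `κ = 1 / (2 K M)` gives `N ≤ K ‖u₀‖ + N / 2`, so `‖u‖ ≤ 2 K ‖u₀‖ w`,
which is at most `R / 2` for small `u₀`; a continuity argument shows that `‖u‖` never reaches `R`.
-/

theorem Continuous.forall_lt_of_bootstrap {φ : ℝ → ℝ} (hφ : Continuous φ) {r R : ℝ} (hrR : r < R)
    (h0 : φ 0 < R) (h : ∀ T > 0, (∀ s ∈ Icc 0 T, φ s < R) → φ T ≤ r) :
    ∀ t ≥ 0, φ t < R := by
  by_contra! hexceed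
  set B := Ici 0 ∩ φ ⁻¹' Ici R
  have hB : IsClosed B := isClosed_Ici.inter (isClosed_Ici.preimage hφ)
  have hbdd : BddBelow B := ⟨0, fun _ hs => hs.1⟩
  obtain ⟨hT0, hTR⟩ : sInf B ∈ B := hB.csInf_mem hexceed hbdd
  have hT : 0 < sInf B := hT0.lt_of_ne fun h => (h0.trans_le (h ▸ hTR)).false
  have hbefore : ∀ t ∈ Ioo 0 (sInf B), φ t ≤ r := fun t ht =>
    h t ht.1 fun s hs => lt_of_not_ge fun hRs =>
      notMem_of_lt_csInf (hs.2.trans_lt ht.2) hbdd ⟨hs.1, hRs⟩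
  have hTr : φ (sInf B) ≤ r :=
    (isClosed_le hφ continuous_const).closure_subset_iff.2 hbefore
      (closure_Ioo hT.ne ▸ right_mem_Icc.2 hT0)
  exact absurd (hTR.trans hTr) (not_le.2 hrR)

namespace FractionalStability

noncomputable def weight (α t : ℝ) : ℝ := min (t ^ (-α)) 1

noncomputable def kernel (α r : ℝ) : ℝ := min (r ^ (-α - 1)) (r ^ (α - 1))

section Weight

variable {α s t : ℝ}

theorem weight_nonneg (ht : 0 ≤ t) : 0 ≤ weight α t :=
  le_min (rpow_nonneg ht _) zero_le_one

theorem weight_le_one : weight α t ≤ 1 := min_le_right _ _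

theorem weight_le_rpow : weight α t ≤ t ^ (-α) := min_le_left _ _

theorem weight_eq_inv_max (ht : 0 < t) : weight α t = (max (t ^ α) 1)⁻¹ := by
  have hpos : 0 < t ^ α := rpow_pos_of_pos ht α
  rw [weight, rpow_neg ht.le]
  rcases le_total (t ^ α) 1 with h | h
  · rw [max_eq_right h, inv_one, min_eq_right (one_le_inv₀ hpos |>.2 h)]
  · rw [max_eq_left h, min_eq_left (inv_le_one_of_one_le₀ h)]

theorem le_mul_weight_iff {a c : ℝ} (ht : 0 < t) :
    a ≤ c * weight α t ↔ a * max (t ^ α) 1 ≤ c := by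
  rw [weight_eq_inv_max ht, le_mul_inv_iff₀ (zero_lt_one.trans_le (le_max_right _ _))]

theorem weight_le_weight (hα : 0 ≤ α) (hs : 0 < s) (hst : s ≤ t) : weight α t ≤ weight α s :=
  min_le_min_right _ (rpow_le_rpow_of_nonpos hs hst (neg_nonpos.2 hα))

theorem weight_half_le (hα0 : 0 ≤ α) (hα1 : α ≤ 1) (ht : 0 < t) :
    weight α (t / 2) ≤ 2 * weight α t := by
  have h2 : (1 : ℝ) ≤ 2 ^ α := one_le_rpow one_le_two hα0
  calc weight α (t / 2) = min (2 ^ α * t ^ (-α)) 1 := by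
        rw [weight, div_rpow ht.le zero_le_two, rpow_neg zero_le_two, div_inv_eq_mul, mul_comm]
    _ ≤ min (2 ^ α * t ^ (-α)) (2 ^ α * 1) := min_le_min_left _ (by rwa [mul_one])
    _ = 2 ^ α * weight α t := (mul_min_of_nonneg _ _ (zero_le_one.trans h2)).symm
    _ ≤ 2 * weight α t := by
        gcongr
        · exact weight_nonneg ht.le
        · simpa using rpow_le_rpow_of_exponent_le one_le_two hα1

end Weight

section Kernel

variable {α r : ℝ}

theorem kernel_nonneg (hr : 0 ≤ r) : 0 ≤ kernel α r :=
  le_min (rpow_nonneg hr _) (rpow_nonneg hr _)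

theorem kernel_mul_rpow_le_weight (hα : 0 ≤ α) (hr : 0 < r) :
    kernel α r * r ^ (1 - α) ≤ weight α r := by
  rw [kernel, min_mul_of_nonneg _ _ (rpow_nonneg hr.le _), ← rpow_add hr, ← rpow_add hr,
    show α - 1 + (1 - α) = 0 by ring, rpow_zero]
  rcases le_total r 1 with h | h
  · exact (min_le_right _ _).trans_eq
      (min_eq_right (one_le_rpow_of_pos_of_le_one_of_nonpos hr h (neg_nonpos.2 hα))).symm
  · exact min_le_min_right _ (rpow_le_rpow_of_exponent_le h (by linarith))

theorem kernel_antitoneOn (hα0 : -1 ≤ α) (hα1 : α ≤ 1) : AntitoneOn (kernel α) (Ioi 0) :=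
  fun _ hr _ _ hrs => min_le_min (rpow_le_rpow_of_nonpos hr hrs (by linarith))
    (rpow_le_rpow_of_nonpos hr hrs (by linarith))

theorem measurable_kernel : Measurable (kernel α) := by
  unfold kernel; fun_prop

theorem measurable_weight : Measurable (weight α) := by
  unfold weight; fun_prop

theorem integrableOn_kernel (hα : 0 < α) : IntegrableOn (kernel α) (Ioi 0) := by
  rw [← Ioc_union_Ioi_eq_Ioi (zero_le_one' ℝ)]
  refine integrableOn_union.2 ⟨?_, ?_⟩
  · refine Integrable.mono'
      (intervalIntegral.intervalIntegrable_rpow' (a := 0) (b := 1) (r := α - 1) (by linarith)).1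
      measurable_kernel.aestronglyMeasurable (ae_restrict_of_forall_mem measurableSet_Ioc ?_)
    intro r hr
    rw [norm_of_nonneg (kernel_nonneg hr.1.le)]
    exact min_le_right _ _
  · refine Integrable.mono' (integrableOn_Ioi_rpow_of_lt (a := -α - 1) (by linarith) zero_lt_one)
      measurable_kernel.aestronglyMeasurable (ae_restrict_of_forall_mem measurableSet_Ioi ?_)
    intro r hr
    rw [norm_of_nonneg (kernel_nonneg (zero_le_one.trans hr.le))]
    exact min_le_left _ _

theorem integral_kernel_le (hα : 0 < α) : ∫ r in Ioi 0, kernel α r ≤ 2 / α := by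
  have hint := integrableOn_kernel hα
  rw [← Ioc_union_Ioi_eq_Ioi zero_le_one, setIntegral_union Ioc_disjoint_Ioi_same measurableSet_Ioi
    (hint.mono_set Ioc_subset_Ioi_self) (hint.mono_set (Ioi_subset_Ioi zero_le_one))]
  have hsmall : ∫ r in Ioc 0 1, kernel α r ≤ 1 / α := by
    calc ∫ r in Ioc 0 1, kernel α r ≤ ∫ r in Ioc 0 1, r ^ (α - 1) :=
          setIntegral_mono_on (hint.mono_set Ioc_subset_Ioi_self)
            (intervalIntegral.intervalIntegrable_rpow' (by linarith)).1 measurableSet_Ioc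
            fun _ _ => min_le_right _ _
      _ = 1 / α := by
          rw [← intervalIntegral.integral_of_le zero_le_one, integral_rpow (by left; linarith),
            sub_add_cancel, one_rpow, zero_rpow hα.ne', sub_zero]
  have hlarge : ∫ r in Ioi 1, kernel α r ≤ 1 / α := by
    calc ∫ r in Ioi 1, kernel α r ≤ ∫ r in Ioi 1, r ^ (-α - 1) :=
          setIntegral_mono_on (hint.mono_set (Ioi_subset_Ioi zero_le_one))
            (integrableOn_Ioi_rpow_of_lt (by linarith) zero_lt_one) measurableSet_Ioi
            fun _ _ => min_le_left _ _
      _ = 1 / α := by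
          rw [integral_Ioi_rpow_of_lt (by linarith) zero_lt_one, sub_add_cancel, one_rpow,
            neg_div_neg_eq]
  exact (add_le_add hsmall hlarge).trans_eq (by ring)

theorem intervalIntegrable_kernel (hα : 0 < α) {a : ℝ} (ha : 0 ≤ a) :
    IntervalIntegrable (kernel α) volume 0 a :=
  (intervalIntegrable_iff_integrableOn_Ioc_of_le ha).2
    ((integrableOn_kernel hα).mono_set Ioc_subset_Ioi_self)

theorem intervalIntegral_kernel_le (hα : 0 < α) {a : ℝ} (ha : 0 ≤ a) :
    ∫ r in 0..a, kernel α r ≤ 2 / α := by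
  rw [intervalIntegral.integral_of_le ha]
  refine (setIntegral_mono_set (integrableOn_kernel hα) ?_ Ioc_subset_Ioi_self.eventuallyLE).trans
    (integral_kernel_le hα)
  exact ae_restrict_of_forall_mem measurableSet_Ioi fun r hr => kernel_nonneg (le_of_lt hr)

theorem intervalIntegrable_kernel_sub_mul_weight (hα : 0 < α) {t : ℝ} (ht : 0 ≤ t) :
    IntervalIntegrable (fun s => kernel α (t - s) * weight α s) volume 0 t := by
  have hmaj : IntervalIntegrable (fun s => (t - s) ^ (α - 1)) volume 0 t := by
    simpa using (intervalIntegral.intervalIntegrable_rpow' (a := t) (b := 0)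
      (r := α - 1) (by linarith)).comp_sub_left t
  refine hmaj.mono_fun' ((measurable_kernel.comp (measurable_const.sub measurable_id)).mul
    measurable_weight).aestronglyMeasurable (ae_restrict_of_forall_mem measurableSet_uIoc ?_)
  intro s hs
  rw [uIoc_of_le ht] at hs
  have hts : 0 ≤ t - s := sub_nonneg.2 hs.2
  dsimp only
  rw [norm_of_nonneg (mul_nonneg (kernel_nonneg hts) (weight_nonneg hs.1.le))]
  exact (mul_le_of_le_one_right (kernel_nonneg hts) weight_le_one).trans (min_le_right _ _)

theorem integral_kernel_sub_mul_weight_first_half_le (hα : α ∈ Ioo 0 1) {t : ℝ} (ht : 0 < t) :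
    ∫ s in 0..t / 2, kernel α (t - s) * weight α s ≤ 2 / (1 - α) * weight α t := by
  obtain ⟨hα0, hα1⟩ := hα
  have h1α : 0 < 1 - α := sub_pos.2 hα1
  have ht2 : 0 < t / 2 := half_pos ht
  calc ∫ s in 0..t / 2, kernel α (t - s) * weight α s
      ≤ ∫ s in 0..t / 2, kernel α (t / 2) * s ^ (-α) := by
        refine intervalIntegral.integral_mono_on ht2.le
          ((intervalIntegrable_kernel_sub_mul_weight hα0 ht.le).mono_set
            (uIcc_subset_uIcc left_mem_uIcc (mem_uIcc_of_le ht2.le (half_le_self ht.le))))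
          ((intervalIntegral.intervalIntegrable_rpow' (by linarith)).const_mul _) ?_
        intro s hs
        have hts : t / 2 ≤ t - s := by linarith [hs.2]
        exact mul_le_mul (kernel_antitoneOn (by linarith) hα1.le ht2 (ht2.trans_le hts) hts)
          weight_le_rpow (weight_nonneg hs.1) (kernel_nonneg ht2.le)
    _ = kernel α (t / 2) * (t / 2) ^ (1 - α) / (1 - α) := by
        rw [intervalIntegral.integral_const_mul, integral_rpow (by left; linarith),
          zero_rpow (by linarith), neg_add_eq_sub, sub_zero, mul_div_assoc]
    _ ≤ weight α (t / 2) / (1 - α) := by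
        gcongr; exact kernel_mul_rpow_le_weight hα0.le ht2
    _ ≤ 2 * weight α t / (1 - α) := by
        gcongr; exact weight_half_le hα0.le hα1.le ht
    _ = 2 / (1 - α) * weight α t := by ring

theorem integral_kernel_sub_mul_weight_second_half_le (hα : α ∈ Ioo 0 1) {t : ℝ} (ht : 0 < t) :
    ∫ s in t / 2..t, kernel α (t - s) * weight α s ≤ 4 / α * weight α t := by
  obtain ⟨hα0, hα1⟩ := hα
  have ht2 : 0 < t / 2 := half_pos ht
  calc ∫ s in t / 2..t, kernel α (t - s) * weight α s
      ≤ ∫ s in t / 2..t, kernel α (t - s) * weight α (t / 2) := by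
        refine intervalIntegral.integral_mono_on (half_le_self ht.le)
          ((intervalIntegrable_kernel_sub_mul_weight hα0 ht.le).mono_set
            (uIcc_subset_uIcc (mem_uIcc_of_le ht2.le (half_le_self ht.le)) right_mem_uIcc)) ?_ ?_
        · simpa only [sub_zero, sub_half] using
            ((intervalIntegrable_kernel hα0 ht2.le).comp_sub_left t).symm.mul_const _
        · intro s hs
          exact mul_le_mul_of_nonneg_left (weight_le_weight hα0.le ht2 hs.1)
            (kernel_nonneg (sub_nonneg.2 hs.2))
    _ = (∫ r in 0..t / 2, kernel α r) * weight α (t / 2) := by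
        rw [intervalIntegral.integral_mul_const, intervalIntegral.integral_comp_sub_left,
          sub_self, sub_half]
    _ ≤ 2 / α * (2 * weight α t) :=
        mul_le_mul (intervalIntegral_kernel_le hα0 ht2.le) (weight_half_le hα0.le hα1.le ht)
          (weight_nonneg ht2.le) (by positivity)
    _ = 4 / α * weight α t := by ring

theorem integral_kernel_sub_mul_weight_le (hα : α ∈ Ioo 0 1) {t : ℝ} (ht : 0 < t) :
    ∫ s in 0..t, kernel α (t - s) * weight α s ≤ (4 / α + 2 / (1 - α)) * weight α t := by
  have hint := intervalIntegrable_kernel_sub_mul_weight hα.1 ht.le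
  have hmid : t / 2 ∈ uIcc 0 t := mem_uIcc_of_le (half_pos ht).le (half_le_self ht.le)
  rw [← intervalIntegral.integral_add_adjacent_intervals
    (hint.mono_set (uIcc_subset_uIcc left_mem_uIcc hmid))
    (hint.mono_set (uIcc_subset_uIcc hmid right_mem_uIcc))]
  linarith [integral_kernel_sub_mul_weight_first_half_le hα ht,
    integral_kernel_sub_mul_weight_second_half_le hα ht]

end Kernel

section MildSolution

variable {X : Type*} [NormedAddCommGroup X] [NormedSpace ℝ X]
  {α K : ℝ} {S P : ℝ → X →L[ℝ] X}

theorem norm_rpow_smul_apply_le (hα : α ≠ 1) (hK : 0 ≤ K)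
    (hP : ∀ t : ℝ, 0 < t → ∀ v : X, ‖t ^ (α - 1) • P t v‖ ≤ K * ‖v‖ * kernel α t)
    {r : ℝ} (hr : 0 ≤ r) (v : X) : ‖r ^ (α - 1) • P r v‖ ≤ K * ‖v‖ * kernel α r := by
  rcases hr.eq_or_lt with rfl | hr
  · rw [zero_rpow (sub_ne_zero.2 hα), zero_smul, norm_zero]
    exact mul_nonneg (mul_nonneg hK (norm_nonneg v)) (kernel_nonneg le_rfl)
  · exact hP r hr v

theorem norm_integral_rpow_smul_le (hα : α ∈ Ioo 0 1) (hK : 0 ≤ K)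
    (hP : ∀ t : ℝ, 0 < t → ∀ v : X, ‖t ^ (α - 1) • P t v‖ ≤ K * ‖v‖ * kernel α t)
    {t N : ℝ} (ht : 0 < t) (hN : 0 ≤ N) {g : ℝ → X}
    (hg : ∀ s ∈ Ioc 0 t, ‖g s‖ ≤ N * weight α s) :
    ‖∫ s in 0..t, (t - s) ^ (α - 1) • P (t - s) (g s)‖
      ≤ K * N * (4 / α + 2 / (1 - α)) * weight α t :=
  calc ‖∫ s in 0..t, (t - s) ^ (α - 1) • P (t - s) (g s)‖
      ≤ ∫ s in 0..t, K * N * (kernel α (t - s) * weight α s) := by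
        refine intervalIntegral.norm_integral_le_of_norm_le ht.le (ae_of_all _ fun s hs => ?_)
          ((intervalIntegrable_kernel_sub_mul_weight hα.1 ht.le).const_mul _)
        have hts : 0 ≤ t - s := sub_nonneg.2 hs.2
        calc ‖(t - s) ^ (α - 1) • P (t - s) (g s)‖ ≤ K * ‖g s‖ * kernel α (t - s) :=
              norm_rpow_smul_apply_le hα.2.ne hK hP hts _
          _ ≤ K * (N * weight α s) * kernel α (t - s) := by
              gcongr
              exacts [kernel_nonneg hts, hg s hs]
          _ = K * N * (kernel α (t - s) * weight α s) := by ring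
    _ = K * N * ∫ s in 0..t, kernel α (t - s) * weight α s :=
        intervalIntegral.integral_const_mul _ _
    _ ≤ K * N * ((4 / α + 2 / (1 - α)) * weight α t) := by
        gcongr
        exact integral_kernel_sub_mul_weight_le hα ht
    _ = K * N * (4 / α + 2 / (1 - α)) * weight α t := by ring

theorem norm_le_mul_weight_of_forall_norm_lt (hα : α ∈ Ioo 0 1) (hK : 0 ≤ K)
    (hS : ∀ t : ℝ, 0 < t → ∀ v : X, ‖S t v‖ ≤ K * ‖v‖ * weight α t)
    (hP : ∀ t : ℝ, 0 < t → ∀ v : X, ‖t ^ (α - 1) • P t v‖ ≤ K * ‖v‖ * kernel α t)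
    {f : ℝ → X → X} {κ R : ℝ} (hκ : 0 ≤ κ) (hκK : K * κ * (4 / α + 2 / (1 - α)) ≤ 1 / 2)
    (hf : ∀ t : ℝ, 0 ≤ t → ∀ w : X, ‖w‖ < R → ‖f t w‖ ≤ κ * ‖w‖)
    {u₀ : X} {u : ℝ → X} (hu : Continuous u)
    (hmild : ∀ t : ℝ, 0 ≤ t →
      u t = S t u₀ + ∫ s in (0:ℝ)..t, (t - s) ^ (α - 1) • P (t - s) (f s (u s)))
    {T : ℝ} (hT : 0 < T) (hsmall : ∀ s ∈ Icc 0 T, ‖u s‖ < R) :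
    ∀ t ∈ Ioc 0 T, ‖u t‖ ≤ 2 * K * ‖u₀‖ * weight α t := by
  set φ : ℝ → ℝ := fun s => ‖u s‖ * max (s ^ α) 1
  have hφ : Continuous φ := hu.norm.mul ((continuous_rpow_const hα.1.le).max continuous_const)
  obtain ⟨s₀, hs₀, hmax⟩ := isCompact_Icc.exists_isMaxOn (nonempty_Icc.2 hT.le) hφ.continuousOn
  set N := φ s₀
  have hN : 0 ≤ N := mul_nonneg (norm_nonneg _) (zero_le_one.trans (le_max_right _ _))
  have hbound : ∀ s ∈ Ioc 0 T, ‖u s‖ ≤ N * weight α s := fun s hs =>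
    (le_mul_weight_iff hs.1).2 (hmax ⟨hs.1.le, hs.2⟩)
  have hstep : ∀ t ∈ Ioc 0 T, φ t ≤ K * ‖u₀‖ + N / 2 := by
    intro t ht
    have hsource : ∀ s ∈ Ioc 0 t, ‖f s (u s)‖ ≤ κ * N * weight α s := fun s hs => by
      have hsT : s ∈ Ioc 0 T := ⟨hs.1, hs.2.trans ht.2⟩
      rw [mul_assoc]
      exact (hf s hs.1.le _ (hsmall s (Ioc_subset_Icc_self hsT))).trans
        (mul_le_mul_of_nonneg_left (hbound s hsT) hκ)
    refine (le_mul_weight_iff ht.1).1 ?_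
    rw [hmild t ht.1.le]
    calc _ ≤ K * ‖u₀‖ * weight α t + K * (κ * N) * (4 / α + 2 / (1 - α)) * weight α t :=
          (norm_add_le _ _).trans (add_le_add (hS t ht.1 u₀)
            (norm_integral_rpow_smul_le hα hK hP ht.1 (mul_nonneg hκ hN) hsource))
      _ = K * ‖u₀‖ * weight α t + K * κ * (4 / α + 2 / (1 - α)) * (N * weight α t) := by ring
      _ ≤ K * ‖u₀‖ * weight α t + 1 / 2 * (N * weight α t) := by
          gcongr
          exact mul_nonneg hN (weight_nonneg ht.1.le)
      _ = (K * ‖u₀‖ + N / 2) * weight α t := by ring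
  -- The maximiser `s₀` may be `0`, outside the range of `hstep`; continuity of `φ` covers it.
  have hN_le : N ≤ K * ‖u₀‖ + N / 2 := by
    have hIcc : Icc 0 T ⊆ {s | φ s ≤ K * ‖u₀‖ + N / 2} := by
      rw [← closure_Ioc hT.ne]
      exact (isClosed_le hφ continuous_const).closure_subset_iff.2 hstep
    exact hIcc hs₀
  intro t ht
  calc ‖u t‖ ≤ N * weight α t := hbound t ht
    _ ≤ 2 * K * ‖u₀‖ * weight α t := by
        gcongr
        · exact weight_nonneg ht.1.le
        · linarith

end MildSolution

end FractionalStability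

open FractionalStability

theorem nonlinear_stability_general
    {X : Type*} [NormedAddCommGroup X] [NormedSpace ℝ X]
    (α : ℝ) (hα : α ∈ Set.Ioo (0:ℝ) 1)
    (Sα Pα : ℝ → X →L[ℝ] X) (K : ℝ) (hK : 0 < K)
    (hS : ∀ t : ℝ, 0 < t → ∀ v : X, ‖Sα t v‖ ≤ K * ‖v‖ * min (t ^ (-α)) 1)
    (hP : ∀ t : ℝ, 0 < t → ∀ v : X,
      ‖(t ^ (α - 1)) • Pα t v‖ ≤ K * ‖v‖ * min (t ^ (-α - 1)) (t ^ (α - 1)))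
    (f : ℝ → X → X)
    (hf : ∀ κ : ℝ, 0 < κ → ∃ R : ℝ, 0 < R ∧
      ∀ t : ℝ, 0 ≤ t → ∀ w : X, ‖w‖ < R → ‖f t w‖ ≤ κ * ‖w‖) :
    ∃ δ : ℝ, 0 < δ ∧ ∃ C : ℝ, 0 < C ∧
      ∀ u₀ : X, ‖u₀‖ ≤ δ →
        ∀ u : ℝ → X, Continuous u →
          (∀ t : ℝ, 0 ≤ t →
            u t = Sα t u₀ + ∫ s in (0:ℝ)..t, ((t - s) ^ (α - 1)) • Pα (t - s) (f s (u s))) →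
          ∀ t : ℝ, 0 < t → ‖u t‖ ≤ C * ‖u₀‖ * min (t ^ (-α)) 1 := by
  set M := 4 / α + 2 / (1 - α)
  have hM : 0 < M := by
    have := sub_pos.2 hα.2
    have := hα.1
    positivity
  obtain ⟨R, hR, hfR⟩ := hf (1 / (2 * K * M)) (by positivity)
  have hκK : K * (1 / (2 * K * M)) * M ≤ 1 / 2 := le_of_eq (by field_simp)
  -- `u 0 = Sα 0 u₀` is not controlled by `hS`, hence `‖Sα 0‖` in `δ`.
  refine ⟨R / (2 * (2 * K + ‖Sα 0‖)), by positivity, 2 * K, by positivity,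
    fun u₀ hu₀ u hu hmild => ?_⟩
  have hδ : (2 * K + ‖Sα 0‖) * ‖u₀‖ ≤ R / 2 := by
    rw [le_div_iff₀ (by positivity)] at hu₀
    linarith
  have hdecay := fun T hT => norm_le_mul_weight_of_forall_norm_lt hα hK.le hS hP
    (by positivity) hκK hfR hu hmild (T := T) hT
  have hu0 : ‖u 0‖ < R := by
    have h0 := hmild 0 le_rfl
    rw [intervalIntegral.integral_same, add_zero] at h0
    rw [h0]
    calc ‖Sα 0 u₀‖ ≤ ‖Sα 0‖ * ‖u₀‖ := (Sα 0).le_opNorm u₀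
      _ < R := by nlinarith [norm_nonneg u₀]
  have hsmall : ∀ t ≥ 0, ‖u t‖ < R :=
    hu.norm.forall_lt_of_bootstrap (half_lt_self hR) hu0 fun T hT hsmall =>
      calc ‖u T‖ ≤ 2 * K * ‖u₀‖ * weight α T := hdecay T hT hsmall T ⟨hT, le_rfl⟩
        _ ≤ 2 * K * ‖u₀‖ := mul_le_of_le_one_right (by positivity) weight_le_one
        _ ≤ R / 2 := by nlinarith [norm_nonneg u₀, norm_nonneg (Sα 0)]
  exact fun t ht => hdecay t ht (fun s hs => hsmall s hs.1) t ⟨ht, le_rfl⟩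

theorem nonlinear_stability
    {X : Type*} [NormedAddCommGroup X] [NormedSpace ℝ X] [CompleteSpace X]
    (α : ℝ) (hα : α ∈ Set.Ioo (0:ℝ) 1)
    (Sα Pα : ℝ → X →L[ℝ] X) (K : ℝ) (hK : 0 < K)
    (hS : ∀ t : ℝ, 0 < t → ∀ v : X, ‖Sα t v‖ ≤ K * ‖v‖ * min (t ^ (-α)) 1)
    (hP : ∀ t : ℝ, 0 < t → ∀ v : X,
      ‖(t ^ (α - 1)) • Pα t v‖ ≤ K * ‖v‖ * min (t ^ (-α - 1)) (t ^ (α - 1)))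
    (f : ℝ → X → X)
    (hf : ∀ κ : ℝ, 0 < κ → ∃ R : ℝ, 0 < R ∧
      ∀ t : ℝ, 0 ≤ t → ∀ w : X, ‖w‖ < R → ‖f t w‖ ≤ κ * ‖w‖) :
    ∃ δ : ℝ, 0 < δ ∧ ∃ C : ℝ, 0 < C ∧
      ∀ u₀ : X, ‖u₀‖ ≤ δ →
        ∀ u : ℝ → X, Continuous u →
          (∀ t : ℝ, 0 ≤ t →
            u t = Sα t u₀ + ∫ s in (0:ℝ)..t, ((t - s) ^ (α - 1)) • Pα (t - s) (f s (u s))) →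
          ∀ t : ℝ, 0 < t → ‖u t‖ ≤ C * ‖u₀‖ * min (t ^ (-α)) 1 :=
  nonlinear_stability_general α hα Sα Pα K hK hS hP f hf
end
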